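/- For every τ ≥ 0 and every μ ≥ 0, the soft-thresholding risk is bounded by its large-amplitude limit: r(μ, τ) ≤ 1 + τ². -/

import Mathlib

open MeasureTheory Filter

/-- Complex soft thresholding: `η(x;τ) = (1 - τ/|x|)·x` if `|x| > τ`, else `0`. -/
noncomputable def softThresh (x : ℂ) (τ : ℝ) : ℂ :=
  if τ < ‖x‖ then ((1 - τ / ‖x‖ : ℝ) : ℂ) * x else 0

/-- Risk of complex soft thresholding at amplitude `μ`:
`r(μ,τ) = ∫_{ℝ²} |η(μ + z₁ + i z₂; τ) − μ|² (1/π) e^{−(z₁²+z₂²)} dz₁ dz₂`. -/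
noncomputable def softRisk (μ τ : ℝ) : ℝ :=
  ∫ z : ℝ × ℝ,
    ‖softThresh ((μ : ℂ) + (z.1 : ℂ) + Complex.I * (z.2 : ℂ)) τ - (μ : ℂ)‖ ^ 2 *
      ((1 / Real.pi) * Real.exp (-(z.1 ^ 2 + z.2 ^ 2)))

/-!
Soft thresholding is `η(x) = x - P x`, where `P` is the metric projection onto the closed disc of
radius `τ`. Pairing the noise `z` with `-z`, which the Gaussian weight cannot distinguish, the cross
terms of `|η(μ + z) - μ|² + |η(μ - z) - μ|²` combine into `-2 ⟪z, P (μ + z) - P (μ - z)⟫`, which is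
`≤ 0` because the projection is monotone, while `|P|² ≤ τ²`. So the pair is at most
`2 (|z|² + τ²)` pointwise, and `E |z|² = 1`.
-/

open Real RealInnerProductSpace

section closedBallProj

variable {E : Type*} [NormedAddCommGroup E] [InnerProductSpace ℝ E]

noncomputable def closedBallProj (τ : ℝ) (x : E) : E :=
  if τ < ‖x‖ then (τ / ‖x‖) • x else x

variable {τ : ℝ}

theorem norm_closedBallProj_le (hτ : 0 ≤ τ) (x : E) : ‖closedBallProj τ x‖ ≤ τ := by
  unfold closedBallProj
  split_ifs with h
  · have hx : 0 < ‖x‖ := hτ.trans_lt h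
    rw [norm_smul, Real.norm_of_nonneg (by positivity), div_mul_cancel₀ _ hx.ne']
  · exact not_lt.mp h

theorem inner_sub_closedBallProj_le {p : E} (hp : ‖p‖ ≤ τ) (x : E) :
    ⟪x - closedBallProj τ x, p - closedBallProj τ x⟫ ≤ 0 := by
  unfold closedBallProj
  split_ifs with h
  · have hx : 0 < ‖x‖ := ((norm_nonneg p).trans hp).trans_lt h
    have hsub : x - (τ / ‖x‖) • x = (1 - τ / ‖x‖) • x := by rw [sub_smul, one_smul]
    have hc : 0 ≤ 1 - τ / ‖x‖ := by rw [sub_nonneg, div_le_one hx]; exact h.le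
    have hxp : ⟪x, p - (τ / ‖x‖) • x⟫ ≤ 0 := by
      rw [inner_sub_right, real_inner_smul_right, real_inner_self_eq_norm_sq]
      have := real_inner_le_norm x p
      field_simp
      nlinarith
    rw [hsub, real_inner_smul_left]
    exact mul_nonpos_of_nonneg_of_nonpos hc hxp
  · simp

theorem inner_closedBallProj_sub_nonneg (hτ : 0 ≤ τ) (x y : E) :
    0 ≤ ⟪closedBallProj τ x - closedBallProj τ y, x - y⟫ := by
  have hx := inner_sub_closedBallProj_le (norm_closedBallProj_le hτ y) x
  have hy := inner_sub_closedBallProj_le (norm_closedBallProj_le hτ x) y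
  have key : ⟪closedBallProj τ x - closedBallProj τ y, x - y⟫ =
      ‖closedBallProj τ x - closedBallProj τ y‖ ^ 2
        - ⟪x - closedBallProj τ x, closedBallProj τ y - closedBallProj τ x⟫
        - ⟪y - closedBallProj τ y, closedBallProj τ x - closedBallProj τ y⟫ := by
    rw [← real_inner_self_eq_norm_sq]
    simp only [inner_sub_left, inner_sub_right, real_inner_comm]
    ring
  nlinarith [sq_nonneg ‖closedBallProj τ x - closedBallProj τ y‖]

theorem norm_sub_closedBallProj_sq_add_le (hτ : 0 ≤ τ) (m z : E) :
    ‖z - closedBallProj τ (m + z)‖ ^ 2 + ‖z + closedBallProj τ (m - z)‖ ^ 2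
      ≤ 2 * (‖z‖ ^ 2 + τ ^ 2) := by
  have hmono := inner_closedBallProj_sub_nonneg hτ (m + z) (m - z)
  have h2z : m + z - (m - z) = (2 : ℝ) • z := by rw [two_smul]; abel
  rw [h2z, real_inner_smul_right, inner_sub_left] at hmono
  have ha := norm_closedBallProj_le hτ (m + z)
  have hb := norm_closedBallProj_le hτ (m - z)
  rw [real_inner_comm z, real_inner_comm z] at hmono
  rw [norm_sub_sq_real, norm_add_sq_real]
  nlinarith [norm_nonneg (closedBallProj τ (m + z)), norm_nonneg (closedBallProj τ (m - z))]

end closedBallProj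

theorem softThresh_eq_sub_closedBallProj (x : ℂ) (τ : ℝ) :
    softThresh x τ = x - closedBallProj τ x := by
  unfold softThresh closedBallProj
  split_ifs
  · rw [Complex.real_smul, Complex.ofReal_sub, Complex.ofReal_one, sub_mul, one_mul]
  · rw [sub_self]

theorem measurable_softThresh (τ : ℝ) : Measurable (softThresh · τ) := by
  unfold softThresh
  exact Measurable.ite (measurableSet_lt measurable_const measurable_norm) (by fun_prop)
    measurable_const

theorem norm_softThresh_sub_sq_add_le {τ : ℝ} (hτ : 0 ≤ τ) (m z : ℂ) :
    ‖softThresh (m + z) τ - m‖ ^ 2 + ‖softThresh (m - z) τ - m‖ ^ 2 ≤ 2 * (‖z‖ ^ 2 + τ ^ 2) := by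
  have hplus : softThresh (m + z) τ - m = z - closedBallProj τ (m + z) := by
    rw [softThresh_eq_sub_closedBallProj]; abel
  have hminus : softThresh (m - z) τ - m = -(z + closedBallProj τ (m - z)) := by
    rw [softThresh_eq_sub_closedBallProj]; abel
  rw [hplus, hminus, norm_neg]
  exact norm_sub_closedBallProj_sq_add_le hτ m z

theorem two_mul_integral_le_of_add_comp_neg_le {G : Type*} [AddGroup G] [MeasurableSpace G]
    [MeasurableNeg G] {μ : Measure G} [μ.IsNegInvariant] {f g : G → ℝ} (hf₀ : ∀ x, 0 ≤ f x)
    (hf : AEStronglyMeasurable f μ) (hg : Integrable g μ) (h : ∀ x, f x + f (-x) ≤ g x) :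
    2 * ∫ x, f x ∂μ ≤ ∫ x, g x ∂μ := by
  have hfg : Integrable f μ :=
    hg.mono' hf (ae_of_all _ fun x => by
      rw [Real.norm_of_nonneg (hf₀ x)]; linarith [h x, hf₀ (-x)])
  have hfneg : Integrable (fun x => f (-x)) μ := hfg.comp_neg
  calc 2 * ∫ x, f x ∂μ = ∫ x, f x + f (-x) ∂μ := by
        rw [integral_add hfg hfneg, integral_neg_eq_self f μ, two_mul]
    _ ≤ ∫ x, g x ∂μ := integral_mono (hfg.add hfneg) hg h

theorem integral_sq_mul_exp_neg_sq : ∫ x : ℝ, x ^ 2 * exp (-x ^ 2) = √π / 2 := by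
  have hΓ : Gamma (3 / 2) = √π / 2 := by
    rw [show (3 / 2 : ℝ) = 1 / 2 + 1 by norm_num, Gamma_add_one (by norm_num), Gamma_one_half_eq]
    ring
  have hIoi := integral_rpow_mul_exp_neg_mul_rpow (p := 2) (q := 2) (b := 1) two_pos
    (by norm_num) one_pos
  norm_num [hΓ] at hIoi
  have hsymm := integral_comp_abs (f := fun x => x ^ 2 * exp (-x ^ 2))
  simp only [sq_abs] at hsymm
  rw [hsymm, hIoi]
  ring

noncomputable def gaussDensity (z : ℝ × ℝ) : ℝ := (1 / π) * exp (-(z.1 ^ 2 + z.2 ^ 2))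

theorem gaussDensity_nonneg (z : ℝ × ℝ) : 0 ≤ gaussDensity z := by
  unfold gaussDensity; positivity

theorem gaussDensity_neg (z : ℝ × ℝ) : gaussDensity (-z) = gaussDensity z := by
  simp [gaussDensity]

theorem integrable_exp_neg_sq : Integrable fun x : ℝ => exp (-x ^ 2) := by
  simpa using integrable_exp_neg_mul_sq one_pos

theorem integrable_sq_mul_exp_neg_sq : Integrable fun x : ℝ => x ^ 2 * exp (-x ^ 2) := by
  simpa using integrable_rpow_mul_exp_neg_mul_sq one_pos (s := 2) (by norm_num)

theorem integral_exp_neg_sq : ∫ x : ℝ, exp (-x ^ 2) = √π := by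
  simpa using integral_gaussian 1

theorem sq_add_sq_add_mul_gaussDensity (c : ℝ) (z : ℝ × ℝ) :
    (z.1 ^ 2 + z.2 ^ 2 + c) * gaussDensity z =
      (1 / π) * (z.1 ^ 2 * exp (-z.1 ^ 2) * exp (-z.2 ^ 2)
        + exp (-z.1 ^ 2) * (z.2 ^ 2 * exp (-z.2 ^ 2))
        + c * (exp (-z.1 ^ 2) * exp (-z.2 ^ 2))) := by
  rw [gaussDensity, neg_add, exp_add]
  ring

theorem integrable_sq_add_mul_gaussDensity (c : ℝ) :
    Integrable fun z : ℝ × ℝ => (z.1 ^ 2 + z.2 ^ 2 + c) * gaussDensity z := by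
  simp_rw [sq_add_sq_add_mul_gaussDensity]
  rw [Measure.volume_eq_prod]
  exact (((integrable_sq_mul_exp_neg_sq.mul_prod integrable_exp_neg_sq).add
    (integrable_exp_neg_sq.mul_prod integrable_sq_mul_exp_neg_sq)).add
    ((integrable_exp_neg_sq.mul_prod integrable_exp_neg_sq).const_mul c)).const_mul _

theorem integral_sq_add_mul_gaussDensity (c : ℝ) :
    ∫ z : ℝ × ℝ, (z.1 ^ 2 + z.2 ^ 2 + c) * gaussDensity z = 1 + c := by
  have h20 := integrable_sq_mul_exp_neg_sq.mul_prod integrable_exp_neg_sq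
  have h02 := integrable_exp_neg_sq.mul_prod integrable_sq_mul_exp_neg_sq
  have h00 := integrable_exp_neg_sq.mul_prod integrable_exp_neg_sq
  simp_rw [sq_add_sq_add_mul_gaussDensity]
  rw [Measure.volume_eq_prod, integral_const_mul, integral_add _ (h00.const_mul c),
    integral_add h20 h02, integral_const_mul,
    integral_prod_mul (fun x => x ^ 2 * exp (-x ^ 2)) (fun y => exp (-y ^ 2)),
    integral_prod_mul (fun x => exp (-x ^ 2)) (fun y => y ^ 2 * exp (-y ^ 2)),
    integral_prod_mul (fun x => exp (-x ^ 2)) (fun y => exp (-y ^ 2)),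
    integral_sq_mul_exp_neg_sq, integral_exp_neg_sq]
  · field_simp
    rw [sq_sqrt pi_pos.le]
    ring
  · exact h20.add h02

theorem softRisk_le_general (τ : ℝ) (hτ : 0 ≤ τ) (μ : ℝ) :
    softRisk μ τ ≤ 1 + τ ^ 2 := by
  set F : ℝ × ℝ → ℝ := fun z =>
    ‖softThresh ((μ : ℂ) + (z.1 : ℂ) + Complex.I * (z.2 : ℂ)) τ - (μ : ℂ)‖ ^ 2 with hF
  have hpair (z : ℝ × ℝ) : F z + F (-z) ≤ 2 * (z.1 ^ 2 + z.2 ^ 2 + τ ^ 2) := by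
    have hζ : ‖(z.1 : ℂ) + Complex.I * z.2‖ ^ 2 = z.1 ^ 2 + z.2 ^ 2 := by
      rw [mul_comm, ← Complex.normSq_eq_norm_sq, Complex.normSq_add_mul_I]
    have h := norm_softThresh_sub_sq_add_le hτ μ (z.1 + Complex.I * z.2)
    rw [hζ] at h
    simp only [hF, Prod.fst_neg, Prod.snd_neg, Complex.ofReal_neg]
    convert h using 6 <;> ring
  have hF_meas : Measurable fun z => F z * gaussDensity z := by
    have := measurable_softThresh τ
    unfold gaussDensity
    fun_prop
  have hbound := two_mul_integral_le_of_add_comp_neg_le (μ := volume)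
    (f := fun z => F z * gaussDensity z)
    (fun z => mul_nonneg (sq_nonneg _) (gaussDensity_nonneg z)) hF_meas.aestronglyMeasurable
    ((integrable_sq_add_mul_gaussDensity (τ ^ 2)).const_mul 2) fun z => by
      rw [gaussDensity_neg, ← add_mul, ← mul_assoc]
      exact mul_le_mul_of_nonneg_right (hpair z) (gaussDensity_nonneg z)
  change 2 * softRisk μ τ ≤ _ at hbound
  rw [integral_const_mul, integral_sq_add_mul_gaussDensity] at hbound
  linarith

/-- For every `τ ≥ 0` and `μ ≥ 0`, the soft-thresholding risk is bounded by its
large-amplitude limit: `r(μ, τ) ≤ 1 + τ²`. -/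
theorem softRisk_le (τ : ℝ) (hτ : 0 ≤ τ) (μ : ℝ) (hμ : 0 ≤ μ) :
    softRisk μ τ ≤ 1 + τ ^ 2 :=
  softRisk_le_general τ hτ μ
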